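/- arXiv:1608.06165 — 2 statements merged into one kernel-verified Lean document; each statement's English description precedes it below -/
import Mathlib

section
/- Let F : [-1,1] → ℝ be C¹ and G an antiderivative of F with G' = F. Then for N(z) = (1/2) z G(z), the pointwise identity (1/2)(1-z²)(N'(z))² - N(z)² = (1/8)(1-z²) z² F(z)² + (1/8) d/dz[G(z)² (1-z²) z] holds, and consequently 2π ∫_{-1}^{1} [(1/2)(1-z²)(N')² - N²] dz = 2π ∫_{-1}^{1} (1/8) z²(1-z²) F(z)² dz. -/
open Set intervalIntegral

/-- For `F` of class `C¹` on `[-1,1]`, `G` an antiderivative of `F`, and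
`N(z) = (1/2) z G(z)`, the pointwise identity
`(1/2)(1-z²)(N'(z))² - N(z)² = (1/8)(1-z²) z² F(z)² + (1/8) d/dz[G(z)² (1-z²) z]`
holds, and consequently
`2π ∫_{-1}^{1} [(1/2)(1-z²)(N')² - N²] dz = 2π ∫_{-1}^{1} (1/8) z²(1-z²) F(z)² dz`. -/
theorem integral_N_identity (F F' G : ℝ → ℝ)
    (hG : ∀ z ∈ Icc (-1 : ℝ) 1, HasDerivAt G (F z) z)
    (hF : ∀ z ∈ Icc (-1 : ℝ) 1, HasDerivAt F (F' z) z)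
    (hF' : ContinuousOn F' (Icc (-1 : ℝ) 1)) :
    (∀ z ∈ Icc (-1 : ℝ) 1,
      (1 / 2) * (1 - z ^ 2) * (deriv (fun w => (1 / 2) * w * G w) z) ^ 2
          - ((1 / 2) * z * G z) ^ 2
        = (1 / 8) * (1 - z ^ 2) * z ^ 2 * (F z) ^ 2
            + (1 / 8) * deriv (fun w => (G w) ^ 2 * (1 - w ^ 2) * w) z) ∧
    2 * Real.pi * ∫ z in (-1 : ℝ)..1,
        ((1 / 2) * (1 - z ^ 2) * (deriv (fun w => (1 / 2) * w * G w) z) ^ 2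
          - ((1 / 2) * z * G z) ^ 2)
      = 2 * Real.pi * ∫ z in (-1 : ℝ)..1,
          (1 / 8) * z ^ 2 * (1 - z ^ 2) * (F z) ^ 2 := by
  have hN : ∀ z ∈ Icc (-1 : ℝ) 1,
      HasDerivAt (fun w => (1 / 2) * w * G w) ((1 / 2) * 1 * G z + (1 / 2) * z * F z) z := by
    intro z hz
    exact ((hasDerivAt_id z).const_mul (1 / 2)).mul (hG z hz)
  have hH : ∀ z ∈ Icc (-1 : ℝ) 1,
      HasDerivAt (fun w => (G w) ^ 2 * (1 - w ^ 2) * w)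
        ((((2 : ℕ) * G z ^ 1 * F z) * (1 - z ^ 2)
          + (G z) ^ 2 * (0 - (2 : ℕ) * z ^ 1 * 1)) * z + (G z) ^ 2 * (1 - z ^ 2) * 1) z := by
    intro z hz
    exact ((((hG z hz).pow 2).mul ((hasDerivAt_const z (1 : ℝ)).sub
      ((hasDerivAt_id z).pow 2))).mul (hasDerivAt_id z))
  have hpt : ∀ z ∈ Icc (-1 : ℝ) 1,
      (1 / 2) * (1 - z ^ 2) * (deriv (fun w => (1 / 2) * w * G w) z) ^ 2
          - ((1 / 2) * z * G z) ^ 2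
        = (1 / 8) * (1 - z ^ 2) * z ^ 2 * (F z) ^ 2
            + (1 / 8) * deriv (fun w => (G w) ^ 2 * (1 - w ^ 2) * w) z := by
    intro z hz
    rw [(hN z hz).deriv, (hH z hz).deriv]
    push_cast
    ring
  refine ⟨hpt, ?_⟩
  have h11 : ((-1 : ℝ)) ≤ 1 := by norm_num
  have hicc : uIcc (-1 : ℝ) 1 = Icc (-1 : ℝ) 1 := uIcc_of_le h11
  have cG : ContinuousOn G (Icc (-1 : ℝ) 1) := fun z hz =>
    (hG z hz).continuousAt.continuousWithinAt
  have cF : ContinuousOn F (Icc (-1 : ℝ) 1) := fun z hz =>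
    (hF z hz).continuousAt.continuousWithinAt
  set g₂ : ℝ → ℝ := fun z =>
    ((((2 : ℕ) * G z ^ 1 * F z) * (1 - z ^ 2)
      + (G z) ^ 2 * (0 - (2 : ℕ) * z ^ 1 * 1)) * z + (G z) ^ 2 * (1 - z ^ 2) * 1) with hg₂
  have cg₂ : ContinuousOn g₂ (Icc (-1 : ℝ) 1) := by
    apply ContinuousOn.add
    · apply ContinuousOn.mul
      · apply ContinuousOn.add
        · exact (ContinuousOn.mul (ContinuousOn.mul (continuousOn_const.mul (cG.pow 1)) cF)
            (continuousOn_const.sub (continuousOn_pow 2)))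
        · exact (cG.pow 2).mul (continuousOn_const.sub
            ((continuousOn_const.mul (continuousOn_pow 1)).mul continuousOn_const))
      · exact continuousOn_id
    · exact ((cG.pow 2).mul (continuousOn_const.sub (continuousOn_pow 2))).mul continuousOn_const
  have ig₂ : IntervalIntegrable g₂ MeasureTheory.volume (-1 : ℝ) 1 := by
    apply ContinuousOn.intervalIntegrable
    rwa [hicc]
  have ig₁ : IntervalIntegrable (fun z => (1 / 8) * z ^ 2 * (1 - z ^ 2) * (F z) ^ 2)
      MeasureTheory.volume (-1 : ℝ) 1 := by
    apply ContinuousOn.intervalIntegrable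
    rw [hicc]
    exact ((continuousOn_const.mul (continuousOn_pow 2)).mul
      (continuousOn_const.sub (continuousOn_pow 2))).mul (cF.pow 2)
  have hcongr : (∫ z in (-1 : ℝ)..1,
        ((1 / 2) * (1 - z ^ 2) * (deriv (fun w => (1 / 2) * w * G w) z) ^ 2
          - ((1 / 2) * z * G z) ^ 2))
      = ∫ z in (-1 : ℝ)..1,
          ((1 / 8) * z ^ 2 * (1 - z ^ 2) * (F z) ^ 2 + (1 / 8) * g₂ z) := by
    apply intervalIntegral.integral_congr
    intro z hz
    rw [hicc] at hz
    simp only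
    rw [hpt z hz, (hH z hz).deriv]
    ring
  rw [hcongr, intervalIntegral.integral_add ig₁ (ig₂.const_mul (1 / 8))]
  have hfund := intervalIntegral.integral_eq_sub_of_hasDerivAt
    (f := fun w => (G w) ^ 2 * (1 - w ^ 2) * w) (f' := g₂)
    (fun z hz => hH z (hicc ▸ hz)) ig₂
  have : (∫ z in (-1 : ℝ)..1, (1 / 8) * g₂ z) = 0 := by
    rw [intervalIntegral.integral_const_mul, hfund]
    norm_num
  rw [this]
  ring
end

section
/- Let F be C² on [-1,1], and define I(z) = V⁽⁻²⁾(z) + h⁽⁻²⁾(z) + V⁽⁻¹⁾(z)h⁽⁻¹⁾(z), where V⁽⁻¹⁾ = (1/2)F(1-z²), h⁽⁻¹⁾ = -Fz² + (1/2)F'z(1-z²), V⁽⁻²⁾ = -(3/2)Fz(1-z²) + (1/4)F'(1-z²)² - (1/8)F²(1-z²)², and h⁽⁻²⁾ = (1/4)F''z(1-z²)² - (F'/2)(-1 + 6z² - 5z⁴) + (F/2)(9z³ - 7z) + (F²/4)(6z² - 7z⁴) - FF'[(1/2)z(1-z²)² - (1/4)z³(1-z²)]. Then ∫_{-1}^{1}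 I(z) dz = ∫_{-1}^{1} [-F(z)z + (1/8)F(z)²z²(1-z²)] dz. -/
/-!
Collecting total derivatives: `I` differs from the right-hand integrand by the derivative of
`(1 - z²) · (z (1 - z²) F' / 4 + (1 - 3z²) F / 2 - z (1 - 2z²) F² / 8)`,
which vanishes at both endpoints `z = ±1` because of the factor `1 - z²`.
-/

open Set intervalIntegral

theorem intervalIntegral.integral_eq_integral_of_hasDerivAt_sub {E : Type*}
    [NormedAddCommGroup E] [NormedSpace ℝ E] [CompleteSpace E] {f g G : ℝ → E} {a b : ℝ}
    (hG : ∀ x ∈ uIcc a b, HasDerivAt G (f x - g x) x)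
    (hf : IntervalIntegrable f MeasureTheory.volume a b)
    (hg : IntervalIntegrable g MeasureTheory.volume a b) (hGab : G a = G b) :
    ∫ x in a..b, f x = ∫ x in a..b, g x := by
  have hFTC := integral_eq_sub_of_hasDerivAt hG (hf.sub hg)
  rw [integral_sub hf hg, hGab, sub_self] at hFTC
  exact sub_eq_zero.mp hFTC

namespace Vaidya

noncomputable section

/-! `V₁, h₁, V₂, h₂` are the paper's `V⁽⁻¹⁾, h⁽⁻¹⁾, V⁽⁻²⁾, h⁽⁻²⁾`. -/

def V₁ (F : ℝ → ℝ) (z : ℝ) : ℝ := (1 / 2) * F z * (1 - z ^ 2)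

def h₁ (F F' : ℝ → ℝ) (z : ℝ) : ℝ := -(F z) * z ^ 2 + (1 / 2) * F' z * z * (1 - z ^ 2)

def V₂ (F F' : ℝ → ℝ) (z : ℝ) : ℝ :=
  -(3 / 2) * F z * z * (1 - z ^ 2) + (1 / 4) * F' z * (1 - z ^ 2) ^ 2
    - (1 / 8) * (F z) ^ 2 * (1 - z ^ 2) ^ 2

def h₂ (F F' F'' : ℝ → ℝ) (z : ℝ) : ℝ :=
  (1 / 4) * F'' z * z * (1 - z ^ 2) ^ 2
    - (F' z / 2) * (-1 + 6 * z ^ 2 - 5 * z ^ 4)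
    + (F z / 2) * (9 * z ^ 3 - 7 * z)
    + ((F z) ^ 2 / 4) * (6 * z ^ 2 - 7 * z ^ 4)
    - F z * F' z * ((1 / 2) * z * (1 - z ^ 2) ^ 2 - (1 / 4) * z ^ 3 * (1 - z ^ 2))

def I (F F' F'' : ℝ → ℝ) (z : ℝ) : ℝ := V₂ F F' z + h₂ F F' F'' z + V₁ F z * h₁ F F' z

def boundaryTerm (F F' : ℝ → ℝ) (z : ℝ) : ℝ :=
  (1 - z ^ 2) * (z * (1 - z ^ 2) / 4 * F' z + (1 - 3 * z ^ 2) / 2 * F z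
    - z * (1 - 2 * z ^ 2) / 8 * F z ^ 2)

theorem boundaryTerm_of_sq_eq_one (F F' : ℝ → ℝ) {z : ℝ} (hz : z ^ 2 = 1) :
    boundaryTerm F F' z = 0 := by
  simp [boundaryTerm, hz]

theorem hasDerivAt_boundaryTerm {F F' F'' : ℝ → ℝ} {z : ℝ} (hF : HasDerivAt F (F' z) z)
    (hF' : HasDerivAt F' (F'' z) z) :
    HasDerivAt (boundaryTerm F F')
      (I F F' F'' z - (-(F z) * z + (1 / 8) * (F z) ^ 2 * z ^ 2 * (1 - z ^ 2))) z := by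
  have hid := hasDerivAt_id' z
  have hsq := hasDerivAt_pow 2 z
  refine HasDerivAt.congr_deriv (f := boundaryTerm F F') ((hsq.const_sub 1).mul
    ((((hid.mul (hsq.const_sub 1)).div_const 4).mul hF').add
      (((hsq.const_mul 3).const_sub 1).div_const 2 |>.mul hF) |>.sub
      (((hid.mul ((hsq.const_mul 2).const_sub 1)).div_const 8).mul (hF.pow 2)))) ?_
  simp only [I, V₁, h₁, V₂, h₂, Pi.mul_apply]
  ring

theorem continuousOn_I {F F' F'' : ℝ → ℝ} {s : Set ℝ} (hF : ContinuousOn F s)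
    (hF' : ContinuousOn F' s) (hF'' : ContinuousOn F'' s) : ContinuousOn (I F F' F'') s := by
  unfold I V₁ h₁ V₂ h₂
  fun_prop

end

end Vaidya

/-- For `F` of class `C²` on `[-1,1]`, with the explicitly computed Vaidya
expansion coefficients `V⁽⁻¹⁾, h⁽⁻¹⁾, V⁽⁻²⁾, h⁽⁻²⁾`, the integral of
`I = V⁽⁻²⁾ + h⁽⁻²⁾ + V⁽⁻¹⁾ h⁽⁻¹⁾` over `[-1,1]` equals
`∫_{-1}^{1} [-F z + (1/8)F² z²(1-z²)] dz`. -/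
theorem integral_I_eq (F F' F'' : ℝ → ℝ)
    (hF : ∀ z ∈ Icc (-1 : ℝ) 1, HasDerivAt F (F' z) z)
    (hF' : ∀ z ∈ Icc (-1 : ℝ) 1, HasDerivAt F' (F'' z) z)
    (hF'' : ContinuousOn F'' (Icc (-1 : ℝ) 1)) :
    ∫ z in (-1 : ℝ)..1,
        ((-(3 / 2) * F z * z * (1 - z ^ 2) + (1 / 4) * F' z * (1 - z ^ 2) ^ 2
            - (1 / 8) * (F z) ^ 2 * (1 - z ^ 2) ^ 2)
          + ((1 / 4) * F'' z * z * (1 - z ^ 2) ^ 2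
            - (F' z / 2) * (-1 + 6 * z ^ 2 - 5 * z ^ 4)
            + (F z / 2) * (9 * z ^ 3 - 7 * z)
            + ((F z) ^ 2 / 4) * (6 * z ^ 2 - 7 * z ^ 4)
            - F z * F' z * ((1 / 2) * z * (1 - z ^ 2) ^ 2
                - (1 / 4) * z ^ 3 * (1 - z ^ 2)))
          + ((1 / 2) * F z * (1 - z ^ 2))
              * (-(F z) * z ^ 2 + (1 / 2) * F' z * z * (1 - z ^ 2)))
      = ∫ z in (-1 : ℝ)..1,
          (-(F z) * z + (1 / 8) * (F z) ^ 2 * z ^ 2 * (1 - z ^ 2)) := by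
  have hle : (-1 : ℝ) ≤ 1 := by norm_num
  have hFc : ContinuousOn F (Icc (-1) 1) := fun z hz => (hF z hz).continuousAt.continuousWithinAt
  have hF'c : ContinuousOn F' (Icc (-1) 1) :=
    fun z hz => (hF' z hz).continuousAt.continuousWithinAt
  show ∫ z in (-1 : ℝ)..1, Vaidya.I F F' F'' z = _
  refine integral_eq_integral_of_hasDerivAt_sub (G := Vaidya.boundaryTerm F F') (fun z hz => ?_)
    ((Vaidya.continuousOn_I hFc hF'c hF'').intervalIntegrable_of_Icc hle)
    (ContinuousOn.intervalIntegrable_of_Icc hle (by fun_prop)) ?_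
  · rw [uIcc_of_le hle] at hz
    exact Vaidya.hasDerivAt_boundaryTerm (hF z hz) (hF' z hz)
  · rw [Vaidya.boundaryTerm_of_sq_eq_one F F' (by norm_num),
      Vaidya.boundaryTerm_of_sq_eq_one F F' (by norm_num)]
end
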